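/- Let λ ⊆ l×k be a partition and d ≥ 0 with d ≤ λ_d (a d×d square fits in λ). Define λ̃ by removing the leftmost d columns of λ (λ̃_i = max(λ_i − d, 0)), and β by β_i = max(d − λ_{l+1−i}, 0) for 1 ≤ i ≤ l. Then the Littlewood–Richardson coefficient c^{(d^l)+λ̃}_{λ,β} is nonzero, where (d^l)+λ̃ is the partition with i-th part d + λ̃_i. -/

import Mathlib

/-!
Fill every column of the skew shape `target / lam` from the top with `1, 2, 3, …`. Entries
weakly increase along rows because the columns of `lam` shorten from left to right, and the
reverse reading word is a lattice word because each entry `r + 2` sits directly below an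
`r + 1`. So this filling is a Littlewood–Richardson tableau whose content has as `r`-th row
the number of columns of the skew shape longer than `r`. The columns of `target / lam` are
those of index `j < d`, running from row `lam.colLen j` down to row `l - 1`; the ones longer
than `r` are those with `lam.rowLen (l - 1 - r) ≤ j < d`, and there are `beta.rowLen r` of them.
-/

open YoungDiagram

namespace QCGrass

/-- The rectangular Young diagram with `m` rows of length `M`. -/
def rect (m M : ℕ) : YoungDiagram :=
  ⟨Finset.range m ×ˢ Finset.range M, by
    intro a b hba ha
    simp only [Finset.coe_product, Set.mem_prod, Finset.mem_coe, Finset.mem_range] at *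
    exact ⟨lt_of_le_of_lt hba.1 ha.1, lt_of_le_of_lt hba.2 ha.2⟩⟩

/-- The cells of the skew shape `nu / lam`. -/
def skewCells (lam nu : YoungDiagram) : Finset (ℕ × ℕ) := nu.cells \ lam.cells

/-- `T` is a Littlewood–Richardson skew tableau of shape `nu / lam` and content `mu`:
entries (valued in `{1, 2, …}`, with `0` meaning "no entry") are supported exactly on the
skew shape `nu / lam`, weakly increase along rows, strictly increase down columns, the number
of entries equal to `r + 1` is the `r`-th row length of `mu`, and the reverse reading word
(rows read right to left, top to bottom) is a lattice word. -/
def IsLRTableau (lam mu nu : YoungDiagram) (T : ℕ × ℕ → ℕ) : Prop :=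
  lam ≤ nu ∧
  (∀ p : ℕ × ℕ, 1 ≤ T p ↔ p ∈ skewCells lam nu) ∧
  (∀ i j j' : ℕ, j ≤ j' → (i, j) ∈ skewCells lam nu → (i, j') ∈ skewCells lam nu →
      T (i, j) ≤ T (i, j')) ∧
  (∀ i i' j : ℕ, i < i' → (i, j) ∈ skewCells lam nu → (i', j) ∈ skewCells lam nu →
      T (i, j) < T (i', j)) ∧
  (∀ r : ℕ, ((skewCells lam nu).filter (fun p => T p = r + 1)).card = mu.rowLen r) ∧
  (∀ i j r : ℕ,
      ((skewCells lam nu).filter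
        (fun p => T p = r + 2 ∧ (p.1 < i ∨ (p.1 = i ∧ j ≤ p.2)))).card ≤
      ((skewCells lam nu).filter
        (fun p => T p = r + 1 ∧ (p.1 < i ∨ (p.1 = i ∧ j ≤ p.2)))).card)

/-- The Littlewood–Richardson coefficient `c^nu_{lam, mu}`, defined as the number of
Littlewood–Richardson skew tableaux of shape `nu / lam` and content `mu`. -/
noncomputable def lrCoeff (lam mu nu : YoungDiagram) : ℕ :=
  Nat.card {T : ℕ × ℕ → ℕ // IsLRTableau lam mu nu T}

/-- The set of boxes (in `0`-indexed matrix coordinates) of `mu` rotated 180 degrees and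
placed in the lower-right corner of the `l × k` rectangle. -/
def rotSet (l k : ℕ) (mu : YoungDiagram) : Set (ℕ × ℕ) :=
  {p | p.1 < l ∧ p.2 < k ∧ k - mu.rowLen (l - 1 - p.1) ≤ p.2}

/-- Two boxes are adjacent when they share an edge. -/
def Adjacent (p q : ℕ × ℕ) : Prop :=
  (p.1 = q.1 ∧ (p.2 = q.2 + 1 ∨ q.2 = p.2 + 1)) ∨
  (p.2 = q.2 ∧ (p.1 = q.1 + 1 ∨ q.1 = p.1 + 1))

/-- `mu` is obtained from `lam` by removing a legal `n`-rim hook: `mu ⊆ lam` (so the removal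
leaves a Young diagram), the removed set has `n` boxes, is edge-connected, and contains
no `2 × 2` square. -/
def IsRimHookRemoval (n : ℕ) (lam mu : YoungDiagram) : Prop :=
  mu ≤ lam ∧ (skewCells mu lam).card = n ∧
  (∀ p ∈ skewCells mu lam, ∀ q ∈ skewCells mu lam,
    Relation.ReflTransGen
      (fun a b => a ∈ skewCells mu lam ∧ b ∈ skewCells mu lam ∧ Adjacent a b) p q) ∧
  ¬ ∃ i j : ℕ, (i, j) ∈ skewCells mu lam ∧ (i + 1, j) ∈ skewCells mu lam ∧
      (i, j + 1) ∈ skewCells mu lam ∧ (i + 1, j + 1) ∈ skewCells mu lam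

/-- One legal `n`-rim hook removal step. -/
def RimStep (n : ℕ) (lam mu : YoungDiagram) : Prop := IsRimHookRemoval n lam mu

/-- A diagram is an `n`-core when no legal `n`-rim hook can be removed from it. -/
def IsCore (n : ℕ) (t : YoungDiagram) : Prop := ¬ ∃ s, RimStep n t s

/-- `ReachesIn n m a b` : `b` is obtained from `a` by `m` successive legal `n`-rim hook
removals. -/
def ReachesIn (n : ℕ) : ℕ → YoungDiagram → YoungDiagram → Prop
  | 0 => fun a b => a = b
  | m + 1 => fun a b => ∃ c, RimStep n a c ∧ ReachesIn n m c b

/-- The width (number of occupied columns) of the strip removed in passing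
from `lam` to `mu`. -/
def hookWidth (lam mu : YoungDiagram) : ℕ := ((skewCells mu lam).image Prod.snd).card

/-- The height (number of occupied rows) of the strip removed in passing
from `lam` to `mu`. -/
def hookHeight (lam mu : YoungDiagram) : ℕ := ((skewCells mu lam).image Prod.fst).card

/-- `ReachesInSign n k m s a b` : `b` is obtained from `a` by `m` successive legal `n`-rim
hook removals, and `s = ∏ (-1)^(k - width(R_i))` over the removed hooks `R_i`. -/
def ReachesInSign (n k : ℕ) : ℕ → ℤ → YoungDiagram → YoungDiagram → Prop
  | 0 => fun s a b => a = b ∧ s = 1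
  | m + 1 => fun s a b => ∃ c s', RimStep n a c ∧ ReachesInSign n k m s' c b ∧
      s = (-1) ^ (k - hookWidth a c) * s'

/-- `diagLen lam` is the number of diagonal boxes of `lam`, i.e. the side length of the
largest square contained in `lam`. -/
def diagLen (lam : YoungDiagram) : ℕ := (lam.cells.filter fun p => p.1 = p.2).card

/-- A `d × d` square of boxes fits inside `lam ∩ rotate(mu)` within the `l × k` rectangle. -/
def SquareFits (l k : ℕ) (lam mu : YoungDiagram) (d : ℕ) : Prop :=
  ∃ i j : ℕ, ∀ i' j' : ℕ, i ≤ i' → i' < i + d → j ≤ j' → j' < j + d →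
    (i', j') ∈ lam.cells ∧ (i', j') ∈ rotSet l k mu

/-- The triple product `σ_lam · σ_mu · σ_nu` is nonzero in `H^*(Gr(l, l+k))`: some `rho ⊆ l × k`
has `c^rho_{lam,mu} ≠ 0` and `rho` is disjoint from `rotate(nu)`. -/
def TripleNonzero (l k : ℕ) (lam mu nu : YoungDiagram) : Prop :=
  ∃ rho, rho ≤ rect l k ∧ lrCoeff lam mu rho ≠ 0 ∧
    ∀ i, i < l → rho.rowLen i + nu.rowLen (l - 1 - i) ≤ k

theorem IsLRTableau.le_colLen_zero {lam mu nu : YoungDiagram} {T : ℕ × ℕ → ℕ}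
    (hT : IsLRTableau lam mu nu T) (p : ℕ × ℕ) : T p ≤ mu.colLen 0 := by
  obtain ⟨-, hsupp, -, -, hcount, -⟩ := hT
  by_cases hp : p ∈ skewCells lam nu
  · obtain ⟨r, hr⟩ : ∃ r, T p = r + 1 := Nat.exists_eq_add_of_le' ((hsupp p).mpr hp)
    have hpos : 0 < mu.rowLen r :=
      hcount r ▸ Finset.card_pos.mpr ⟨p, Finset.mem_filter.mpr ⟨hp, hr⟩⟩
    have : r < mu.colLen 0 := mem_iff_lt_colLen.mp (mem_iff_lt_rowLen.mpr hpos)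
    omega
  · have : ¬ 1 ≤ T p := fun h => hp ((hsupp p).mp h)
    omega

theorem finite_lrTableaux (lam mu nu : YoungDiagram) :
    Finite {T : ℕ × ℕ → ℕ // IsLRTableau lam mu nu T} := by
  let restrict (T : {T : ℕ × ℕ → ℕ // IsLRTableau lam mu nu T}) :
      skewCells lam nu → Fin (mu.colLen 0 + 1) :=
    fun q => ⟨T.1 q, Nat.lt_succ_of_le (T.2.le_colLen_zero q)⟩
  refine Finite.of_injective restrict ?_
  rintro ⟨T, hT⟩ ⟨T', hT'⟩ h
  refine Subtype.ext (funext fun p => ?_)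
  by_cases hp : p ∈ skewCells lam nu
  · exact congrArg Fin.val (congrFun h ⟨p, hp⟩)
  · have h1 : ¬ 1 ≤ T p := fun h => hp ((hT.2.1 p).mp h)
    have h2 : ¬ 1 ≤ T' p := fun h => hp ((hT'.2.1 p).mp h)
    change T p = T' p
    omega

theorem lrCoeff_ne_zero_of_isLRTableau {lam mu nu : YoungDiagram} {T : ℕ × ℕ → ℕ}
    (hT : IsLRTableau lam mu nu T) : lrCoeff lam mu nu ≠ 0 :=
  have := finite_lrTableaux lam mu nu
  Nat.card_ne_zero.mpr ⟨⟨T, hT⟩, inferInstance⟩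

theorem mem_skewCells_iff {lam nu : YoungDiagram} {p : ℕ × ℕ} :
    p ∈ skewCells lam nu ↔ lam.colLen p.2 ≤ p.1 ∧ p.1 < nu.colLen p.2 := by
  obtain ⟨i, j⟩ := p
  simp only [skewCells, Finset.mem_sdiff, mem_cells, mem_iff_lt_colLen, not_lt]
  exact and_comm

def columnFilling (lam nu : YoungDiagram) (p : ℕ × ℕ) : ℕ :=
  if p ∈ skewCells lam nu then p.1 - lam.colLen p.2 + 1 else 0

section columnFilling

variable {lam nu : YoungDiagram}

theorem columnFilling_of_mem {p : ℕ × ℕ} (hp : p ∈ skewCells lam nu) :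
    columnFilling lam nu p = p.1 - lam.colLen p.2 + 1 := if_pos hp

theorem columnFilling_eq_succ_iff {p : ℕ × ℕ} (hp : p ∈ skewCells lam nu) (r : ℕ) :
    columnFilling lam nu p = r + 1 ↔ p.1 = lam.colLen p.2 + r := by
  have := (mem_skewCells_iff.mp hp).1
  rw [columnFilling_of_mem hp]
  omega

theorem card_columnFilling_eq_succ (r : ℕ) :
    ((skewCells lam nu).filter (fun p => columnFilling lam nu p = r + 1)).card =
      {j | lam.colLen j + r < nu.colLen j}.ncard := by
  set cells := (skewCells lam nu).filter (fun p => columnFilling lam nu p = r + 1)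
  have hrow : ∀ p ∈ cells, p.1 = lam.colLen p.2 + r := fun p hp =>
    (columnFilling_eq_succ_iff (Finset.mem_filter.mp hp).1 r).mp (Finset.mem_filter.mp hp).2
  have hinj : Set.InjOn Prod.snd (cells : Set (ℕ × ℕ)) := fun p hp q hq hpq =>
    Prod.ext (by rw [hrow p hp, hrow q hq, hpq]) hpq
  have himage : (cells.image Prod.snd : Set ℕ) = {j | lam.colLen j + r < nu.colLen j} := by
    ext j
    simp only [Finset.coe_image, Set.mem_image, Finset.mem_coe, Set.mem_ofPred_eq]
    constructor
    · rintro ⟨p, hp, rfl⟩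
      have := (mem_skewCells_iff.mp (Finset.mem_filter.mp hp).1).2
      rwa [hrow p hp] at this
    · intro hj
      have hmem : (lam.colLen j + r, j) ∈ skewCells lam nu :=
        mem_skewCells_iff.mpr ⟨Nat.le_add_right _ _, hj⟩
      exact ⟨_, Finset.mem_filter.mpr ⟨hmem, (columnFilling_eq_succ_iff hmem r).mpr rfl⟩, rfl⟩
  rw [← Finset.card_image_of_injOn hinj, ← Set.ncard_coe_finset, himage]

theorem isLRTableau_columnFilling {mu : YoungDiagram} (hle : lam ≤ nu)
    (hmu : ∀ r, mu.rowLen r = {j | lam.colLen j + r < nu.colLen j}.ncard) :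
    IsLRTableau lam mu nu (columnFilling lam nu) := by
  refine ⟨hle, fun p => ?_, fun i j j' hj hp hq => ?_, fun i i' j hi hp hq => ?_,
    fun r => (card_columnFilling_eq_succ r).trans (hmu r).symm, fun i j r => ?_⟩
  · unfold columnFilling
    split_ifs with hp <;> simp [hp]
  · have := lam.colLen_anti j j' hj
    rw [columnFilling_of_mem hp, columnFilling_of_mem hq]
    dsimp only at *
    omega
  · have := (mem_skewCells_iff.mp hp).1
    rw [columnFilling_of_mem hp, columnFilling_of_mem hq]
    dsimp only at *
    omega
  · refine Finset.card_le_card_of_injOn (fun p => (p.1 - 1, p.2)) (fun p hp => ?_) ?_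
    · obtain ⟨hmem, hval, hread⟩ := Finset.mem_filter.mp hp
      have hrow := (columnFilling_eq_succ_iff hmem (r + 1)).mp hval
      have hup : (p.1 - 1, p.2) ∈ skewCells lam nu := by
        have := (mem_skewCells_iff.mp hmem).2
        exact mem_skewCells_iff.mpr ⟨by dsimp only; omega, by dsimp only; omega⟩
      refine Finset.mem_filter.mpr ⟨hup, (columnFilling_eq_succ_iff hup r).mpr ?_, ?_⟩ <;>
        dsimp only <;> omega
    · intro p hp q hq hpq
      have hp' := (columnFilling_eq_succ_iff (Finset.mem_filter.mp hp).1 (r + 1)).mp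
        (Finset.mem_filter.mp hp).2.1
      have hq' := (columnFilling_eq_succ_iff (Finset.mem_filter.mp hq).1 (r + 1)).mp
        (Finset.mem_filter.mp hq).2.1
      obtain ⟨-, hcol⟩ := Prod.mk.inj hpq
      exact Prod.ext (by rw [hp', hq', hcol]) hcol

end columnFilling

theorem lrCoeff_ne_zero_of_rowLen_eq_ncard {lam mu nu : YoungDiagram} (hle : lam ≤ nu)
    (hmu : ∀ r, mu.rowLen r = {j | lam.colLen j + r < nu.colLen j}.ncard) :
    lrCoeff lam mu nu ≠ 0 :=
  lrCoeff_ne_zero_of_isLRTableau (isLRTableau_columnFilling hle hmu)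

theorem mem_rect {m n i j : ℕ} : (i, j) ∈ rect m n ↔ i < m ∧ j < n := by
  simp [rect, ← mem_cells]

theorem colLen_le_iff_rowLen_le (μ : YoungDiagram) {i j : ℕ} :
    μ.colLen j ≤ i ↔ μ.rowLen i ≤ j := by
  rw [← not_lt, ← not_lt, ← mem_iff_lt_colLen, ← mem_iff_lt_rowLen]

section target

variable {l d : ℕ} {lam target : YoungDiagram}
  (htarget : ∀ i : ℕ, target.rowLen i = if i < l then max (lam.rowLen i) d else 0)
include htarget

theorem mem_target_iff {i j : ℕ} : (i, j) ∈ target ↔ i < l ∧ (j < d ∨ (i, j) ∈ lam) := by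
  rw [mem_iff_lt_rowLen, mem_iff_lt_rowLen, htarget]
  split_ifs with hi <;> simp [hi, or_comm]

theorem le_target {k : ℕ} (hlam : lam ≤ rect l k) : lam ≤ target := fun _ hp =>
  (mem_target_iff htarget).mpr ⟨(mem_rect.mp (hlam hp)).1, Or.inr hp⟩

theorem ncard_colLen_add_lt_colLen_target (r : ℕ) :
    {j | lam.colLen j + r < target.colLen j}.ncard =
      if r < l then d - lam.rowLen (l - 1 - r) else 0 := by
  have hcol : ∀ j, lam.colLen j + r < target.colLen j ↔ j < d ∧ lam.colLen j + r < l := by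
    intro j
    have hout : (lam.colLen j + r, j) ∉ lam := by
      rw [mem_iff_lt_colLen]
      omega
    rw [← mem_iff_lt_colLen, mem_target_iff htarget]
    tauto
  split_ifs with hr
  · convert Set.ncard_Ico_nat (lam.rowLen (l - 1 - r)) d using 2
    ext j
    have := colLen_le_iff_rowLen_le lam (i := l - 1 - r) (j := j)
    simp only [Set.mem_ofPred_eq, Set.mem_Ico, hcol]
    omega
  · convert Set.ncard_empty ℕ
    ext j
    simp only [Set.mem_ofPred_eq, Set.mem_empty_iff_false, iff_false, hcol]
    omega

end target

theorem buch_first_step_general (l k d : ℕ) (lam beta target : YoungDiagram)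
    (hlam : lam ≤ rect l k)
    (hbeta : ∀ i : ℕ, beta.rowLen i = if i < l then d - lam.rowLen (l - 1 - i) else 0)
    (htarget : ∀ i : ℕ, target.rowLen i = if i < l then max (lam.rowLen i) d else 0) :
    lrCoeff lam beta target ≠ 0 :=
  lrCoeff_ne_zero_of_rowLen_eq_ncard (le_target htarget hlam)
    fun r => (hbeta r).trans (ncard_colLen_add_lt_colLen_target htarget r).symm

/-- Let `lam ⊆ l × k` contain a `d × d` square, let `beta` be given by
`beta_i = max(d - lam_{l+1-i}, 0)` for `1 ≤ i ≤ l`, and let `target = (d^l) + lam-tilde`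
where `lam-tilde` is `lam` with its leftmost `d` columns removed (so the `i`-th part of
`target` is `d + max(lam_i - d, 0) = max(lam_i, d)` for `i ≤ l`).  Then
`c^{target}_{lam, beta} ≠ 0`. -/
theorem buch_first_step (l k d : ℕ) (lam beta target : YoungDiagram)
    (hlam : lam ≤ rect l k) (hsq : rect d d ≤ lam)
    (hbeta : ∀ i : ℕ, beta.rowLen i = if i < l then d - lam.rowLen (l - 1 - i) else 0)
    (htarget : ∀ i : ℕ, target.rowLen i = if i < l then max (lam.rowLen i) d else 0) :
    lrCoeff lam beta target ≠ 0 :=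
  buch_first_step_general l k d lam beta target hlam hbeta htarget

end QCGrass
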